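/- arXiv:2605.14140 — 6 statements merged into one kernel-verified Lean document; each statement's English description precedes it below -/
import Mathlib

section
/- Let n ≥ 2 and s ≥ 1 with 2s − 1 ≤ 2n − 1. In ZMod (8n), let R = {2, 8n−2, 2s−1, 8n−(2s−1), 4n−(2s−1), 4n+(2s−1)} and S = {2, 8n−2, 2n−(2s−1), 6n+(2s−1), 2n+(2s−1), 6n−(2s−1)}. Then the bijection Θ_{8n,2,n} is an isomorphism of simple graphs from C_{8n}(R) onto C_{8n}(S); that is, for all a, b ∈ ZMod (8n), a − b ∈ R if and only if Θ_{8n,2,n}(a) − Θ_{8n,2,n}(b) ∈ S. -/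
/-- The transformation Θ_{n,m,t} : ZMod n → ZMod n, sending x to x + j·t·m where
j is the remainder of the canonical representative of x modulo m. -/
def theta (n m t : ℕ) (x : ZMod n) : ZMod n :=
  x + (((x.val % m) * t * m : ℕ) : ZMod n)

/-- The connection set R = {2, 8n−2, 2s−1, 8n−(2s−1), 4n−(2s−1), 4n+(2s−1)} in ZMod (8n). -/
def Rconn (n s : ℕ) : Set (ZMod (8 * n)) :=
  {((2 : ℕ) : ZMod (8 * n)), ((8 * n - 2 : ℕ) : ZMod (8 * n)),
   ((2 * s - 1 : ℕ) : ZMod (8 * n)), ((8 * n - (2 * s - 1) : ℕ) : ZMod (8 * n)),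
   ((4 * n - (2 * s - 1) : ℕ) : ZMod (8 * n)), ((4 * n + (2 * s - 1) : ℕ) : ZMod (8 * n))}

/-- The connection set S = {2, 8n−2, 2n−(2s−1), 6n+(2s−1), 2n+(2s−1), 6n−(2s−1)} in ZMod (8n). -/
def Sconn (n s : ℕ) : Set (ZMod (8 * n)) :=
  {((2 : ℕ) : ZMod (8 * n)), ((8 * n - 2 : ℕ) : ZMod (8 * n)),
   ((2 * n - (2 * s - 1) : ℕ) : ZMod (8 * n)), ((6 * n + (2 * s - 1) : ℕ) : ZMod (8 * n)),
   ((2 * n + (2 * s - 1) : ℕ) : ZMod (8 * n)), ((6 * n - (2 * s - 1) : ℕ) : ZMod (8 * n))}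

lemma valp {n : ℕ} (hn : 2 ≤ n) (k : ℕ) : ((k : ZMod (8*n))).val % 2 = k % 2 := by
  haveI : NeZero (8*n) := ⟨by omega⟩
  rw [ZMod.val_natCast, Nat.mod_mod_of_dvd _ ⟨4*n, by ring⟩]

lemma valaddp {n : ℕ} (hn : 2 ≤ n) (x y : ZMod (8*n)) :
    (x + y).val % 2 = (x.val + y.val) % 2 := by
  haveI : NeZero (8*n) := ⟨by omega⟩
  rw [ZMod.val_add, Nat.mod_mod_of_dvd _ ⟨4*n, by ring⟩]

lemma cast_add_eq {n : ℕ} (j l k : ℕ) (h : j + l = k ∨ j + l = 8*n + k) :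
    ((j : ℕ) : ZMod (8*n)) + (l : ℕ) = ((k : ℕ) : ZMod (8*n)) := by
  rcases h with h | h
  · rw [← Nat.cast_add, h]
  · rw [← Nat.cast_add, h, Nat.cast_add, ZMod.natCast_self, zero_add]

lemma mem_R {n s : ℕ} {c : ZMod (8*n)} : c ∈ Rconn n s ↔
    c = ((2 : ℕ) : ZMod (8*n)) ∨ c = ((8*n - 2 : ℕ) : ZMod (8*n)) ∨
    c = ((2*s - 1 : ℕ) : ZMod (8*n)) ∨ c = ((8*n - (2*s - 1) : ℕ) : ZMod (8*n)) ∨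
    c = ((4*n - (2*s - 1) : ℕ) : ZMod (8*n)) ∨ c = ((4*n + (2*s - 1) : ℕ) : ZMod (8*n)) := by
  simp only [Rconn, Set.mem_insert_iff, Set.mem_singleton_iff]

lemma mem_S {n s : ℕ} {c : ZMod (8*n)} : c ∈ Sconn n s ↔
    c = ((2 : ℕ) : ZMod (8*n)) ∨ c = ((8*n - 2 : ℕ) : ZMod (8*n)) ∨
    c = ((2*n - (2*s - 1) : ℕ) : ZMod (8*n)) ∨ c = ((6*n + (2*s - 1) : ℕ) : ZMod (8*n)) ∨
    c = ((2*n + (2*s - 1) : ℕ) : ZMod (8*n)) ∨ c = ((6*n - (2*s - 1) : ℕ) : ZMod (8*n)) := by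
  simp only [Sconn, Set.mem_insert_iff, Set.mem_singleton_iff]

lemma evenRS {n s : ℕ} (hn : 2 ≤ n) (hs : 1 ≤ s) (hsn : 2*s - 1 ≤ 2*n - 1)
    (c : ZMod (8*n)) (hpar : c.val % 2 = 0) : c ∈ Rconn n s ↔ c ∈ Sconn n s := by
  rw [mem_R, mem_S]
  constructor
  · rintro (h | h | h | h | h | h)
    · exact Or.inl h
    · exact Or.inr (Or.inl h)
    all_goals (rw [h, valp hn] at hpar; omega)
  · rintro (h | h | h | h | h | h)
    · exact Or.inl h
    · exact Or.inr (Or.inl h)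
    all_goals (rw [h, valp hn] at hpar; omega)

lemma oddRS {n s : ℕ} (hn : 2 ≤ n) (hs : 1 ≤ s) (hsn : 2*s - 1 ≤ 2*n - 1)
    (c : ZMod (8*n)) (hpar : c.val % 2 = 1) :
    c ∈ Rconn n s ↔ c + ((2*n : ℕ) : ZMod (8*n)) ∈ Sconn n s := by
  have hv2 : ((2*n : ℕ) : ZMod (8*n)).val % 2 = (2*n) % 2 := valp hn _
  have hpar2 : (c + ((2*n : ℕ) : ZMod (8*n))).val % 2 = 1 := by
    rw [valaddp hn]; omega
  rw [mem_R, mem_S]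
  constructor
  · rintro (h | h | h | h | h | h)
    · rw [h, valp hn] at hpar; omega
    · rw [h, valp hn] at hpar; omega
    · exact Or.inr (Or.inr (Or.inr (Or.inr (Or.inl (by rw [h]; exact cast_add_eq _ _ _ (by omega))))))
    · exact Or.inr (Or.inr (Or.inl (by rw [h]; exact cast_add_eq _ _ _ (by omega))))
    · exact Or.inr (Or.inr (Or.inr (Or.inr (Or.inr (by rw [h]; exact cast_add_eq _ _ _ (by omega))))))
    · exact Or.inr (Or.inr (Or.inr (Or.inl (by rw [h]; exact cast_add_eq _ _ _ (by omega)))))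
  · rintro (h | h | h | h | h | h)
    · rw [h, valp hn] at hpar2; omega
    · rw [h, valp hn] at hpar2; omega
    · exact Or.inr (Or.inr (Or.inr (Or.inl
        (add_right_cancel (h.trans (cast_add_eq (8*n - (2*s-1)) (2*n) _ (by omega)).symm)))))
    · exact Or.inr (Or.inr (Or.inr (Or.inr (Or.inr
        (add_right_cancel (h.trans (cast_add_eq (4*n + (2*s-1)) (2*n) _ (by omega)).symm))))))
    · exact Or.inr (Or.inr (Or.inl
        (add_right_cancel (h.trans (cast_add_eq (2*s - 1) (2*n) _ (by omega)).symm))))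
    · exact Or.inr (Or.inr (Or.inr (Or.inr (Or.inl
        (add_right_cancel (h.trans (cast_add_eq (4*n - (2*s-1)) (2*n) _ (by omega)).symm))))))

lemma oddSR {n s : ℕ} (hn : 2 ≤ n) (hs : 1 ≤ s) (hsn : 2*s - 1 ≤ 2*n - 1)
    (c : ZMod (8*n)) (hpar : c.val % 2 = 1) :
    c ∈ Sconn n s ↔ c + ((2*n : ℕ) : ZMod (8*n)) ∈ Rconn n s := by
  have hv2 : ((2*n : ℕ) : ZMod (8*n)).val % 2 = (2*n) % 2 := valp hn _
  have hpar2 : (c + ((2*n : ℕ) : ZMod (8*n))).val % 2 = 1 := by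
    rw [valaddp hn]; omega
  rw [mem_R, mem_S]
  constructor
  · rintro (h | h | h | h | h | h)
    · rw [h, valp hn] at hpar; omega
    · rw [h, valp hn] at hpar; omega
    · exact Or.inr (Or.inr (Or.inr (Or.inr (Or.inl (by rw [h]; exact cast_add_eq _ _ _ (by omega))))))
    · exact Or.inr (Or.inr (Or.inl (by rw [h]; exact cast_add_eq _ _ _ (by omega))))
    · exact Or.inr (Or.inr (Or.inr (Or.inr (Or.inr (by rw [h]; exact cast_add_eq _ _ _ (by omega))))))
    · exact Or.inr (Or.inr (Or.inr (Or.inl (by rw [h]; exact cast_add_eq _ _ _ (by omega)))))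
  · rintro (h | h | h | h | h | h)
    · rw [h, valp hn] at hpar2; omega
    · rw [h, valp hn] at hpar2; omega
    · exact Or.inr (Or.inr (Or.inr (Or.inl
        (add_right_cancel (h.trans (cast_add_eq (6*n + (2*s-1)) (2*n) _ (by omega)).symm)))))
    · exact Or.inr (Or.inr (Or.inr (Or.inr (Or.inr
        (add_right_cancel (h.trans (cast_add_eq (6*n - (2*s-1)) (2*n) _ (by omega)).symm))))))
    · exact Or.inr (Or.inr (Or.inl
        (add_right_cancel (h.trans (cast_add_eq (2*n - (2*s-1)) (2*n) _ (by omega)).symm))))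
    · exact Or.inr (Or.inr (Or.inr (Or.inr (Or.inl
        (add_right_cancel (h.trans (cast_add_eq (2*n + (2*s-1)) (2*n) _ (by omega)).symm))))))

theorem theta_iso_R_S (n s : ℕ) (hn : 2 ≤ n) (hs : 1 ≤ s) (hsn : 2 * s - 1 ≤ 2 * n - 1) :
    ∀ a b : ZMod (8 * n),
      a - b ∈ Rconn n s ↔ theta (8 * n) 2 n a - theta (8 * n) 2 n b ∈ Sconn n s := by
  intro a b
  haveI : NeZero (8*n) := ⟨by omega⟩
  have hab : (b + (a - b)).val % 2 = (b.val + (a - b).val) % 2 := valaddp hn _ _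
  rw [add_sub_cancel] at hab
  rcases Nat.mod_two_eq_zero_or_one a.val with ha | ha <;>
    rcases Nat.mod_two_eq_zero_or_one b.val with hb | hb
  · have hd : theta (8*n) 2 n a - theta (8*n) 2 n b = a - b := by
      unfold theta; rw [ha, hb]; push_cast; ring
    rw [hd]
    exact evenRS hn hs hsn _ (by omega)
  · have hd : theta (8*n) 2 n a - theta (8*n) 2 n b = (a - b) - ((2*n : ℕ) : ZMod (8*n)) := by
      unfold theta; rw [ha, hb]; push_cast; ring
    rw [hd]
    have h6 : ((6*n : ℕ) : ZMod (8*n)) + ((2*n : ℕ) : ZMod (8*n)) = 0 := by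
      rw [← Nat.cast_add, show 6*n + 2*n = 8*n by ring, ZMod.natCast_self]
    have hneg : -((2*n : ℕ) : ZMod (8*n)) = ((6*n : ℕ) : ZMod (8*n)) :=
      neg_eq_of_add_eq_zero_left h6
    have hc' : ((a - b) - ((2*n : ℕ) : ZMod (8*n))).val % 2 = 1 := by
      rw [sub_eq_add_neg, hneg, valaddp hn]
      have := valp hn (6*n)
      omega
    have key := oddSR hn hs hsn ((a - b) - ((2*n : ℕ) : ZMod (8*n))) hc'
    rw [sub_add_cancel] at key
    exact key.symm
  · have hd : theta (8*n) 2 n a - theta (8*n) 2 n b = (a - b) + ((2*n : ℕ) : ZMod (8*n)) := by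
      unfold theta; rw [ha, hb]; push_cast; ring
    rw [hd]
    exact oddRS hn hs hsn _ (by omega)
  · have hd : theta (8*n) 2 n a - theta (8*n) 2 n b = a - b := by
      unfold theta; rw [ha, hb]; push_cast; ring
    rw [hd]
    exact evenRS hn hs hsn _ (by omega)
end

section
/- Let n ≥ 2 and s ≥ 1 with 2s − 1 ≤ 2n − 1. In ZMod (8n), let R = {2, 8n−2, 2s−1, 8n−(2s−1), 4n−(2s−1), 4n+(2s−1)} and S = {2, 8n−2, 2n−(2s−1), 6n+(2s−1), 2n+(2s−1), 6n−(2s−1)}. Then the bijection Θ_{8n,2,3n} is an isomorphism of simple graphs from C_{8n}(R) onto C_{8n}(S); that is, for all a, b ∈ ZMod (8n), a − b ∈ R if and only if Θ_{8n,2,3n}(a) − Θ_{8n,2,3n}(b) ∈ S. -/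
def phi (n : ℕ) : ZMod (8*n) →+* ZMod 2 := ZMod.castHom (show (2:ℕ) ∣ 8*n by omega) (ZMod 2)

lemma phi_val (n : ℕ) (hn : n ≠ 0) (x : ZMod (8*n)) : phi n x = ((x.val : ℕ) : ZMod 2) := by
  haveI : NeZero (8*n) := ⟨by omega⟩
  conv_lhs => rw [← ZMod.natCast_rightInverse x]
  exact map_natCast _ _

lemma h8M (n : ℕ) : (8:ZMod (8*n)) * (n : ZMod (8*n)) = 0 := by
  have := ZMod.natCast_self (8*n); push_cast at this; linear_combination this

lemma Rmem (n s : ℕ) (hn : 2 ≤ n) (hs : 1 ≤ s) (hsn : 2*s-1 ≤ 2*n-1) (x : ZMod (8*n)) :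
    x ∈ Rconn n s ↔ (x = 2 ∨ x = -2 ∨ x = ((2*s-1:ℕ) : ZMod (8*n)) ∨ x = -((2*s-1:ℕ) : ZMod (8*n))
      ∨ x = 4*(n:ZMod (8*n)) - ((2*s-1:ℕ) : ZMod (8*n))
      ∨ x = 4*(n:ZMod (8*n)) + ((2*s-1:ℕ) : ZMod (8*n))) := by
  have h8 := h8M n
  have e1 : ((8*n-2 : ℕ) : ZMod (8*n)) = -2 := by
    rw [Nat.cast_sub (by omega)]; push_cast; linear_combination h8
  have e2 : ((8*n-(2*s-1) : ℕ) : ZMod (8*n)) = -((2*s-1:ℕ) : ZMod (8*n)) := by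
    rw [Nat.cast_sub (by omega)]; push_cast; linear_combination h8
  have e3 : ((4*n-(2*s-1) : ℕ) : ZMod (8*n)) = 4*(n:ZMod (8*n)) - ((2*s-1:ℕ):ZMod (8*n)) := by
    rw [Nat.cast_sub (by omega)]; push_cast; ring
  have e4 : ((4*n+(2*s-1) : ℕ) : ZMod (8*n)) = 4*(n:ZMod (8*n)) + ((2*s-1:ℕ):ZMod (8*n)) := by
    push_cast; ring
  simp only [Rconn, Set.mem_insert_iff, Set.mem_singleton_iff, e1, e2, e3, e4, Nat.cast_ofNat]

lemma Smem (n s : ℕ) (hn : 2 ≤ n) (hs : 1 ≤ s) (hsn : 2*s-1 ≤ 2*n-1) (x : ZMod (8*n)) :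
    x ∈ Sconn n s ↔ (x = 2 ∨ x = -2
      ∨ x = 2*(n:ZMod (8*n)) - ((2*s-1:ℕ) : ZMod (8*n))
      ∨ x = 6*(n:ZMod (8*n)) + ((2*s-1:ℕ) : ZMod (8*n))
      ∨ x = 2*(n:ZMod (8*n)) + ((2*s-1:ℕ) : ZMod (8*n))
      ∨ x = 6*(n:ZMod (8*n)) - ((2*s-1:ℕ) : ZMod (8*n))) := by
  have h8 := h8M n
  have e1 : ((8*n-2 : ℕ) : ZMod (8*n)) = -2 := by
    rw [Nat.cast_sub (by omega)]; push_cast; linear_combination h8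
  have e2 : ((2*n-(2*s-1) : ℕ) : ZMod (8*n)) = 2*(n:ZMod (8*n)) - ((2*s-1:ℕ) : ZMod (8*n)) := by
    rw [Nat.cast_sub (by omega)]; push_cast; ring
  have e3 : ((6*n+(2*s-1) : ℕ) : ZMod (8*n)) = 6*(n:ZMod (8*n)) + ((2*s-1:ℕ):ZMod (8*n)) := by
    push_cast; ring
  have e4 : ((2*n+(2*s-1) : ℕ) : ZMod (8*n)) = 2*(n:ZMod (8*n)) + ((2*s-1:ℕ):ZMod (8*n)) := by
    push_cast; ring
  have e5 : ((6*n-(2*s-1) : ℕ) : ZMod (8*n)) = 6*(n:ZMod (8*n)) - ((2*s-1:ℕ):ZMod (8*n)) := by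
    rw [Nat.cast_sub (by omega)]; push_cast; ring
  simp only [Sconn, Set.mem_insert_iff, Set.mem_singleton_iff, e1, e2, e3, e4, e5, Nat.cast_ofNat]

lemma hk2lem (n s : ℕ) (hs : 1 ≤ s) : ((2*s-1 : ℕ) : ZMod 2) = 1 := by
  rw [← ZMod.natCast_mod, show (2*s-1)%2 = 1 by omega, Nat.cast_one]

lemma aux_even (n s : ℕ) (hn : 2 ≤ n) (hs : 1 ≤ s) (hsn : 2*s-1 ≤ 2*n-1)
    (d : ZMod (8*n)) (hd : phi n d = 0) : d ∈ Rconn n s ↔ d ∈ Sconn n s := by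
  rw [Rmem n s hn hs hsn, Smem n s hn hs hsn]
  have hk2 := hk2lem n s hs
  constructor
  · rintro (h|h|h|h|h|h)
    · exact Or.inl h
    · exact Or.inr (Or.inl h)
    all_goals
      exfalso; rw [h] at hd
      simp only [map_sub, map_add, map_neg, map_mul, map_natCast, map_ofNat, hk2] at hd
      revert hd
      first
        | (generalize ((n:ℕ) : ZMod 2) = x; revert x; decide)
        | decide
  · rintro (h|h|h|h|h|h)
    · exact Or.inl h
    · exact Or.inr (Or.inl h)
    all_goals
      exfalso; rw [h] at hd
      simp only [map_sub, map_add, map_neg, map_mul, map_natCast, map_ofNat, hk2] at hd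
      revert hd
      first
        | (generalize ((n:ℕ) : ZMod 2) = x; revert x; decide)
        | decide

lemma aux_odd6 (n s : ℕ) (hn : 2 ≤ n) (hs : 1 ≤ s) (hsn : 2*s-1 ≤ 2*n-1)
    (d : ZMod (8*n)) (hd : phi n d = 1) :
    d ∈ Rconn n s ↔ d + 6*(n:ZMod (8*n)) ∈ Sconn n s := by
  rw [Rmem n s hn hs hsn, Smem n s hn hs hsn]
  have hk2 := hk2lem n s hs
  have h8 := h8M n
  constructor
  · rintro (h|h|h|h|h|h)
    · exfalso; rw [h, map_ofNat] at hd; exact absurd hd (by decide)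
    · exfalso; rw [h, map_neg, map_ofNat] at hd
      exact absurd hd (by decide)
    · right; right; right; left; linear_combination h
    · right; right; right; right; right; linear_combination h
    · right; right; left; linear_combination h + h8
    · right; right; right; right; left; linear_combination h + h8
  · rintro (h|h|h|h|h|h)
    · exfalso
      have h2 := congrArg (phi n) h
      simp only [map_add, map_sub, map_neg, map_mul, map_natCast, map_ofNat, hd, hk2] at h2
      revert h2
      first
        | (generalize ((n:ℕ) : ZMod 2) = x; revert x; decide)
        | decide
    · exfalso
      have h2 := congrArg (phi n) h
      simp only [map_add, map_sub, map_neg, map_mul, map_natCast, map_ofNat, hd, hk2] at h2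
      revert h2
      first
        | (generalize ((n:ℕ) : ZMod 2) = x; revert x; decide)
        | decide
    · right; right; right; right; left; linear_combination h - h8
    · right; right; left; linear_combination h
    · right; right; right; right; right; linear_combination h - h8
    · right; right; right; left; linear_combination h

lemma aux_odd2 (n s : ℕ) (hn : 2 ≤ n) (hs : 1 ≤ s) (hsn : 2*s-1 ≤ 2*n-1)
    (d : ZMod (8*n)) (hd : phi n d = 1) :
    d ∈ Rconn n s ↔ d + 2*(n:ZMod (8*n)) ∈ Sconn n s := by
  rw [Rmem n s hn hs hsn, Smem n s hn hs hsn]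
  have hk2 := hk2lem n s hs
  have h8 := h8M n
  constructor
  · rintro (h|h|h|h|h|h)
    · exfalso; rw [h, map_ofNat] at hd; exact absurd hd (by decide)
    · exfalso; rw [h, map_neg, map_ofNat] at hd
      exact absurd hd (by decide)
    · right; right; right; right; left; linear_combination h
    · right; right; left; linear_combination h
    · right; right; right; right; right; linear_combination h
    · right; right; right; left; linear_combination h
  · rintro (h|h|h|h|h|h)
    · exfalso
      have h2 := congrArg (phi n) h
      simp only [map_add, map_sub, map_neg, map_mul, map_natCast, map_ofNat, hd, hk2] at h2
      revert h2
      first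
        | (generalize ((n:ℕ) : ZMod 2) = x; revert x; decide)
        | decide
    · exfalso
      have h2 := congrArg (phi n) h
      simp only [map_add, map_sub, map_neg, map_mul, map_natCast, map_ofNat, hd, hk2] at h2
      revert h2
      first
        | (generalize ((n:ℕ) : ZMod 2) = x; revert x; decide)
        | decide
    · right; right; right; left; linear_combination h
    · right; right; right; right; right; linear_combination h
    · right; right; left; linear_combination h
    · right; right; right; right; left; linear_combination h

theorem theta_iso_R_S_3n (n s : ℕ) (hn : 2 ≤ n) (hs : 1 ≤ s) (hsn : 2 * s - 1 ≤ 2 * n - 1) :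
    ∀ a b : ZMod (8 * n),
      a - b ∈ Rconn n s ↔ theta (8 * n) 2 (3 * n) a - theta (8 * n) 2 (3 * n) b ∈ Sconn n s := by
  intro a b
  have h8 := h8M n
  have hθ : ∀ x : ZMod (8*n), theta (8*n) 2 (3*n) x
      = x + ((x.val % 2 : ℕ) : ZMod (8*n)) * (6*(n:ZMod (8*n))) := by
    intro x; unfold theta; push_cast; ring
  rw [hθ a, hθ b]
  have hphi : phi n (a - b) = ((a.val % 2 :ℕ) : ZMod 2) - ((b.val % 2 :ℕ) : ZMod 2) := by
    rw [map_sub, phi_val n (by omega) a, phi_val n (by omega) b, ZMod.natCast_mod,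
      ZMod.natCast_mod]
  rcases Nat.mod_two_eq_zero_or_one a.val with ha | ha <;>
    rcases Nat.mod_two_eq_zero_or_one b.val with hb | hb <;>
    rw [ha, hb] at hphi ⊢
  · have hexpr : a + ((0:ℕ) : ZMod (8*n)) * (6*(n:ZMod (8*n)))
        - (b + ((0:ℕ):ZMod (8*n)) * (6*(n:ZMod (8*n)))) = a - b := by push_cast; ring
    rw [hexpr]
    exact aux_even n s hn hs hsn _ (by rw [hphi]; decide)
  · have hexpr : a + ((0:ℕ) : ZMod (8*n)) * (6*(n:ZMod (8*n)))
        - (b + ((1:ℕ):ZMod (8*n)) * (6*(n:ZMod (8*n)))) = a - b + 2*(n:ZMod (8*n)) := by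
      push_cast; linear_combination -h8
    rw [hexpr]
    exact aux_odd2 n s hn hs hsn _ (by rw [hphi]; decide)
  · have hexpr : a + ((1:ℕ) : ZMod (8*n)) * (6*(n:ZMod (8*n)))
        - (b + ((0:ℕ):ZMod (8*n)) * (6*(n:ZMod (8*n)))) = a - b + 6*(n:ZMod (8*n)) := by
      push_cast; ring
    rw [hexpr]
    exact aux_odd6 n s hn hs hsn _ (by rw [hphi]; decide)
  · have hexpr : a + ((1:ℕ) : ZMod (8*n)) * (6*(n:ZMod (8*n)))
        - (b + ((1:ℕ):ZMod (8*n)) * (6*(n:ZMod (8*n)))) = a - b := by push_cast; ring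
    rw [hexpr]
    exact aux_even n s hn hs hsn _ (by rw [hphi]; decide)
end

section
/- Let n ≥ 2 and s ≥ 1 with 2s − 1 ≤ 2n − 1. In ZMod (8n), let R = {2, 8n−2, 2s−1, 8n−(2s−1), 4n−(2s−1), 4n+(2s−1)} and S = {2, 8n−2, 2n−(2s−1), 6n+(2s−1), 2n+(2s−1), 6n−(2s−1)}. Then the bijection Θ_{8n,2,n} is also an isomorphism of simple graphs from C_{8n}(S) onto C_{8n}(R); that is, for all a, b ∈ ZMod (8n), a − b ∈ S if and only if Θ_{8n,2,n}(a) − Θ_{8n,2,n}(b) ∈ R. -/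
theorem theta_iso_S_R (n s : ℕ) (hn : 2 ≤ n) (hs : 1 ≤ s) (hsn : 2 * s - 1 ≤ 2 * n - 1) :
    ∀ a b : ZMod (8 * n),
      a - b ∈ Sconn n s ↔ theta (8 * n) 2 n a - theta (8 * n) 2 n b ∈ Rconn n s := by
  haveI : NeZero (8 * n) := ⟨by omega⟩
  have hdvd : (2 : ℕ) ∣ 8 * n := ⟨4 * n, by ring⟩
  have h8 : (8 : ZMod (8 * n)) * (n : ZMod (8 * n)) = 0 := by
    have h := ZMod.natCast_self (8 * n)
    push_cast at h
    exact h
  -- cast identities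
  have c2 : ((2 : ℕ) : ZMod (8 * n)) = 2 := by norm_cast
  have cm2 : ((8 * n - 2 : ℕ) : ZMod (8 * n)) = -2 := by
    rw [Nat.cast_sub (by omega)]; push_cast; linear_combination h8
  have cmu : ((8 * n - (2 * s - 1) : ℕ) : ZMod (8 * n)) =
      -((2 * s - 1 : ℕ) : ZMod (8 * n)) := by
    rw [Nat.cast_sub (by omega)]; push_cast; linear_combination h8
  have c4m : ((4 * n - (2 * s - 1) : ℕ) : ZMod (8 * n)) =
      4 * (n : ZMod (8 * n)) - ((2 * s - 1 : ℕ) : ZMod (8 * n)) := by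
    rw [Nat.cast_sub (by omega)]; push_cast; ring
  have c4p : ((4 * n + (2 * s - 1) : ℕ) : ZMod (8 * n)) =
      4 * (n : ZMod (8 * n)) + ((2 * s - 1 : ℕ) : ZMod (8 * n)) := by
    push_cast; ring
  have c2m : ((2 * n - (2 * s - 1) : ℕ) : ZMod (8 * n)) =
      2 * (n : ZMod (8 * n)) - ((2 * s - 1 : ℕ) : ZMod (8 * n)) := by
    rw [Nat.cast_sub (by omega)]; push_cast; ring
  have c2p : ((2 * n + (2 * s - 1) : ℕ) : ZMod (8 * n)) =
      2 * (n : ZMod (8 * n)) + ((2 * s - 1 : ℕ) : ZMod (8 * n)) := by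
    push_cast; ring
  have c6m : ((6 * n - (2 * s - 1) : ℕ) : ZMod (8 * n)) =
      6 * (n : ZMod (8 * n)) - ((2 * s - 1 : ℕ) : ZMod (8 * n)) := by
    rw [Nat.cast_sub (by omega)]; push_cast; ring
  have c6p : ((6 * n + (2 * s - 1) : ℕ) : ZMod (8 * n)) =
      6 * (n : ZMod (8 * n)) + ((2 * s - 1 : ℕ) : ZMod (8 * n)) := by
    push_cast; ring
  -- membership characterizations
  have memS : ∀ d : ZMod (8 * n), d ∈ Sconn n s ↔ d = 2 ∨ d = -2 ∨
      d = 2 * (n : ZMod (8 * n)) - ((2 * s - 1 : ℕ) : ZMod (8 * n)) ∨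
      d = 6 * (n : ZMod (8 * n)) + ((2 * s - 1 : ℕ) : ZMod (8 * n)) ∨
      d = 2 * (n : ZMod (8 * n)) + ((2 * s - 1 : ℕ) : ZMod (8 * n)) ∨
      d = 6 * (n : ZMod (8 * n)) - ((2 * s - 1 : ℕ) : ZMod (8 * n)) := by
    intro d
    simp only [Sconn, Set.mem_insert_iff, Set.mem_singleton_iff, c2, cm2, c2m, c6p, c2p, c6m]
  have memR : ∀ d : ZMod (8 * n), d ∈ Rconn n s ↔ d = 2 ∨ d = -2 ∨
      d = ((2 * s - 1 : ℕ) : ZMod (8 * n)) ∨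
      d = -((2 * s - 1 : ℕ) : ZMod (8 * n)) ∨
      d = 4 * (n : ZMod (8 * n)) - ((2 * s - 1 : ℕ) : ZMod (8 * n)) ∨
      d = 4 * (n : ZMod (8 * n)) + ((2 * s - 1 : ℕ) : ZMod (8 * n)) := by
    intro d
    simp only [Rconn, Set.mem_insert_iff, Set.mem_singleton_iff, c2, cm2, cmu, c4m, c4p]
  -- parity homomorphism
  set f : ZMod (8 * n) →+* ZMod 2 := ZMod.castHom hdvd (ZMod 2) with hf
  have hfpar : ∀ x : ZMod (8 * n), f x = ((x.val % 2 : ℕ) : ZMod 2) := by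
    intro x
    rw [hf, ZMod.castHom_apply, ← ZMod.natCast_val, ZMod.natCast_mod]
  have hf2 : f 2 = 0 := by
    rw [← c2, map_natCast]; decide
  have hfu : f ((2 * s - 1 : ℕ) : ZMod (8 * n)) = 1 := by
    rw [map_natCast, show 2 * s - 1 = 2 * (s - 1) + 1 by omega]
    push_cast
    rw [show ((2 : ZMod 2)) = 0 by decide]
    ring
  have hf2N : f (2 * (n : ZMod (8 * n))) = 0 := by
    rw [map_mul, map_ofNat, show ((2 : ZMod 2)) = 0 by decide, zero_mul]
  have hf4N : f (4 * (n : ZMod (8 * n))) = 0 := by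
    rw [map_mul, map_ofNat, show ((4 : ZMod 2)) = 0 by decide, zero_mul]
  have hf6N : f (6 * (n : ZMod (8 * n))) = 0 := by
    rw [map_mul, map_ofNat, show ((6 : ZMod 2)) = 0 by decide, zero_mul]
  -- core equivalences
  have evenCase : ∀ d : ZMod (8 * n), f d = 0 → (d ∈ Sconn n s ↔ d ∈ Rconn n s) := by
    intro d hd
    rw [memS, memR]
    constructor
    · rintro (h | h | h | h | h | h)
      · exact Or.inl h
      · exact Or.inr (Or.inl h)
      · have h' := congrArg f h
        rw [hd, map_sub, hf2N, hfu] at h'; exact absurd h' (by decide)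
      · have h' := congrArg f h
        rw [hd, map_add, hf6N, hfu] at h'; exact absurd h' (by decide)
      · have h' := congrArg f h
        rw [hd, map_add, hf2N, hfu] at h'; exact absurd h' (by decide)
      · have h' := congrArg f h
        rw [hd, map_sub, hf6N, hfu] at h'; exact absurd h' (by decide)
    · rintro (h | h | h | h | h | h)
      · exact Or.inl h
      · exact Or.inr (Or.inl h)
      · have h' := congrArg f h
        rw [hd, hfu] at h'; exact absurd h' (by decide)
      · have h' := congrArg f h
        rw [hd, map_neg, hfu] at h'; exact absurd h' (by decide)
      · have h' := congrArg f h
        rw [hd, map_sub, hf4N, hfu] at h'; exact absurd h' (by decide)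
      · have h' := congrArg f h
        rw [hd, map_add, hf4N, hfu] at h'; exact absurd h' (by decide)
  have oddPlus : ∀ d : ZMod (8 * n), f d = 1 →
      (d ∈ Sconn n s ↔ d + 2 * (n : ZMod (8 * n)) ∈ Rconn n s) := by
    intro d hd
    rw [memS, memR]
    constructor
    · rintro (h | h | h | h | h | h)
      · have h' := congrArg f h
        rw [hd, hf2] at h'; exact absurd h' (by decide)
      · have h' := congrArg f h
        rw [hd, map_neg, hf2] at h'; exact absurd h' (by decide)
      · exact Or.inr (Or.inr (Or.inr (Or.inr (Or.inl (by linear_combination h)))))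
      · exact Or.inr (Or.inr (Or.inl (by linear_combination h + h8)))
      · exact Or.inr (Or.inr (Or.inr (Or.inr (Or.inr (by linear_combination h)))))
      · exact Or.inr (Or.inr (Or.inr (Or.inl (by linear_combination h + h8))))
    · rintro (h | h | h | h | h | h)
      · have h' := congrArg f h
        rw [map_add, hd, hf2N, hf2] at h'; exact absurd h' (by decide)
      · have h' := congrArg f h
        rw [map_add, hd, hf2N, map_neg, hf2] at h'; exact absurd h' (by decide)
      · exact Or.inr (Or.inr (Or.inr (Or.inl (by linear_combination h - h8))))
      · exact Or.inr (Or.inr (Or.inr (Or.inr (Or.inr (by linear_combination h - h8)))))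
      · exact Or.inr (Or.inr (Or.inl (by linear_combination h)))
      · exact Or.inr (Or.inr (Or.inr (Or.inr (Or.inl (by linear_combination h)))))
  have oddMinus : ∀ d : ZMod (8 * n), f d = 1 →
      (d ∈ Sconn n s ↔ d - 2 * (n : ZMod (8 * n)) ∈ Rconn n s) := by
    intro d hd
    rw [memS, memR]
    constructor
    · rintro (h | h | h | h | h | h)
      · have h' := congrArg f h
        rw [hd, hf2] at h'; exact absurd h' (by decide)
      · have h' := congrArg f h
        rw [hd, map_neg, hf2] at h'; exact absurd h' (by decide)
      · exact Or.inr (Or.inr (Or.inr (Or.inl (by linear_combination h))))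
      · exact Or.inr (Or.inr (Or.inr (Or.inr (Or.inr (by linear_combination h)))))
      · exact Or.inr (Or.inr (Or.inl (by linear_combination h)))
      · exact Or.inr (Or.inr (Or.inr (Or.inr (Or.inl (by linear_combination h)))))
    · rintro (h | h | h | h | h | h)
      · have h' := congrArg f h
        rw [map_sub, hd, hf2N, hf2] at h'; exact absurd h' (by decide)
      · have h' := congrArg f h
        rw [map_sub, hd, hf2N, map_neg, hf2] at h'; exact absurd h' (by decide)
      · exact Or.inr (Or.inr (Or.inr (Or.inr (Or.inl (by linear_combination h)))))
      · exact Or.inr (Or.inr (Or.inl (by linear_combination h)))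
      · exact Or.inr (Or.inr (Or.inr (Or.inr (Or.inr (by linear_combination h)))))
      · exact Or.inr (Or.inr (Or.inr (Or.inl (by linear_combination h))))
  -- assemble
  have hθ : ∀ x : ZMod (8 * n), theta (8 * n) 2 n x =
      x + ((x.val % 2 : ℕ) : ZMod (8 * n)) * (2 * (n : ZMod (8 * n))) := by
    intro x
    unfold theta
    push_cast
    ring
  intro a b
  rcases Nat.mod_two_eq_zero_or_one a.val with ha | ha <;>
    rcases Nat.mod_two_eq_zero_or_one b.val with hb | hb
  · have hdiff : theta (8 * n) 2 n a - theta (8 * n) 2 n b = a - b := by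
      rw [hθ, hθ, ha, hb]; push_cast; ring
    have hpar : f (a - b) = 0 := by
      rw [map_sub, hfpar a, hfpar b, ha, hb]; push_cast; ring
    rw [hdiff]
    exact evenCase _ hpar
  · have hdiff : theta (8 * n) 2 n a - theta (8 * n) 2 n b =
        (a - b) - 2 * (n : ZMod (8 * n)) := by
      rw [hθ, hθ, ha, hb]; push_cast; ring
    have hpar : f (a - b) = 1 := by
      rw [map_sub, hfpar a, hfpar b, ha, hb]; decide
    rw [hdiff]
    exact oddMinus _ hpar
  · have hdiff : theta (8 * n) 2 n a - theta (8 * n) 2 n b =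
        (a - b) + 2 * (n : ZMod (8 * n)) := by
      rw [hθ, hθ, ha, hb]; push_cast; ring
    have hpar : f (a - b) = 1 := by
      rw [map_sub, hfpar a, hfpar b, ha, hb]; decide
    rw [hdiff]
    exact oddPlus _ hpar
  · have hdiff : theta (8 * n) 2 n a - theta (8 * n) 2 n b = a - b := by
      rw [hθ, hθ, ha, hb]; push_cast; ring
    have hpar : f (a - b) = 0 := by
      rw [map_sub, hfpar a, hfpar b, ha, hb]; decide
    rw [hdiff]
    exact evenCase _ hpar
end

section
/- Let n ≥ 2 and s ≥ 1 with 2s − 1 ≤ 2n − 1 and n ≠ 2s − 1. In ZMod (8n), let R = {2, 8n−2, 2s−1, 8n−(2s−1), 4n−(2s−1), 4n+(2s−1)} and S = {2, 8n−2, 2n−(2s−1), 6n+(2s−1), 2n+(2s−1), 6n−(2s−1)}. Then there is no unit u of ZMod (8n) with u·R = S; that is, the isomorphic circulant graphs C_{8n}(R) and C_{8n}(S) are not Adam's (Type-1) isomorphic. -/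
theorem castHom_zmod_two_units_mul {m : ℕ} (hm : 2 ∣ m) (u : (ZMod m)ˣ) (x : ZMod m) :
    ZMod.castHom hm (ZMod 2) (u * x) = ZMod.castHom hm (ZMod 2) x := by
  have hu : ZMod.castHom hm (ZMod 2) u = 1 :=
    congrArg Units.val (Subsingleton.elim (ZMod.unitsMap hm u) 1)
  rw [map_mul, hu, one_mul]

theorem four_mul_sub_eq_zero_or_four_mul_eq_zero {A : Type*} [CommRing A] {N a u : A}
    (hN : 8 * N = 0) (hu : u * 2 = 2 ∨ u * 2 = -2)
    (hua : u * a = 2 * N - a ∨ u * a = -(2 * N - a) ∨ u * a = 2 * N + a ∨ u * a = -(2 * N + a)) :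
    4 * (N - a) = 0 ∨ 4 * N = 0 := by
  rcases hu with hu | hu <;> rcases hua with h | h | h | h
  · left; linear_combination a * hu - 2 * h
  · right; linear_combination 2 * h - a * hu
  · right; linear_combination a * hu - 2 * h
  · left; linear_combination a * hu - 2 * h + hN
  · right; linear_combination a * hu - 2 * h
  · left; linear_combination 2 * h - a * hu
  · left; linear_combination 2 * h - a * hu + hN
  · right; linear_combination 2 * h - a * hu

theorem intCast_eq_zero_of_abs_lt {m : ℕ} {x : ℤ} (h : (x : ZMod m) = 0) (hx : |x| < m) :
    x = 0 :=
  Int.eq_zero_of_abs_lt_dvd ((ZMod.intCast_zmod_eq_zero_iff_dvd x m).1 h) hx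

theorem Sconn_eq {n s : ℕ} (hn : 1 ≤ n) (hsn : 2 * s - 1 ≤ 2 * n) :
    Sconn n s = {2, -2,
      2 * n - ((2 * s - 1 : ℕ) : ZMod (8 * n)), -(2 * n - ((2 * s - 1 : ℕ) : ZMod (8 * n))),
      2 * n + ((2 * s - 1 : ℕ) : ZMod (8 * n)), -(2 * n + ((2 * s - 1 : ℕ) : ZMod (8 * n)))} := by
  have h8n : ((8 * n : ℕ) : ZMod (8 * n)) = 0 := ZMod.natCast_self _
  push_cast at h8n
  simp only [Sconn, Nat.cast_sub (show 2 ≤ 8 * n by omega), Nat.cast_sub hsn,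
    Nat.cast_sub (show 2 * s - 1 ≤ 6 * n by omega)]
  push_cast
  set a : ZMod (8 * n) := ((2 * s - 1 : ℕ) : ZMod (8 * n))
  rw [show 8 * (n : ZMod (8 * n)) - 2 = -2 by linear_combination h8n,
    show 6 * (n : ZMod (8 * n)) + a = -(2 * n - a) by linear_combination h8n,
    show 6 * (n : ZMod (8 * n)) - a = -(2 * n + a) by linear_combination h8n]

theorem mem_Sconn_parity {n s : ℕ} (hs : 1 ≤ s) (hsn : 2 * s - 1 ≤ 2 * n)
    (hm : 2 ∣ 8 * n) {x : ZMod (8 * n)} (hx : x ∈ Sconn n s) :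
    (x = 2 ∨ x = -2) ∧ ZMod.castHom hm (ZMod 2) x = 0 ∨
    (x = 2 * n - ((2 * s - 1 : ℕ) : ZMod (8 * n)) ∨ x = -(2 * n - ((2 * s - 1 : ℕ) : ZMod (8 * n))) ∨
      x = 2 * n + ((2 * s - 1 : ℕ) : ZMod (8 * n)) ∨ x = -(2 * n + ((2 * s - 1 : ℕ) : ZMod (8 * n)))) ∧
      ZMod.castHom hm (ZMod 2) x = 1 := by
  have h2 : ZMod.castHom hm (ZMod 2) 2 = 0 := by rw [map_ofNat]; rfl
  have h2n : ZMod.castHom hm (ZMod 2) (2 * n) = 0 := by rw [map_mul, h2, zero_mul]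
  have ha : ZMod.castHom hm (ZMod 2) ((2 * s - 1 : ℕ) : ZMod (8 * n)) = 1 := by
    rw [map_natCast, ZMod.natCast_eq_one_iff_odd]
    exact ⟨s - 1, by omega⟩
  rw [Sconn_eq (by omega) hsn] at hx
  simp only [Set.mem_insert_iff, Set.mem_singleton_iff] at hx
  rcases hx with rfl | rfl | rfl | rfl | rfl | rfl
  · exact Or.inl ⟨Or.inl rfl, h2⟩
  · exact Or.inl ⟨Or.inr rfl, by rw [map_neg, h2, neg_zero]⟩
  all_goals
    refine Or.inr ⟨by simp only [true_or, or_true], ?_⟩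
    simp only [map_neg, map_add, map_sub, h2n, ha]
    decide

theorem not_adams_iso_general (n s : ℕ) (hs : 1 ≤ s) (hsn : 2 * s - 1 ≤ 2 * n - 1)
    (hne : n ≠ 2 * s - 1) :
    ¬ ∃ u : (ZMod (8 * n))ˣ,
      (fun r => (u : ZMod (8 * n)) * r) '' Rconn n s = Sconn n s := by
  rintro ⟨u, hu⟩
  have hm : 2 ∣ 8 * n := dvd_mul_of_dvd_left (by norm_num) n
  have hmaps : ∀ r ∈ Rconn n s, (u : ZMod (8 * n)) * r ∈ Sconn n s :=
    fun r hr => hu ▸ Set.mem_image_of_mem _ hr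
  have h2 := ((mem_Sconn_parity hs (by omega) hm (hmaps 2 (by simp [Rconn]))).resolve_right
    fun ⟨_, hodd⟩ => by
      rw [castHom_zmod_two_units_mul, map_ofNat] at hodd
      exact absurd hodd (by decide)).1
  have ha := ((mem_Sconn_parity hs (by omega) hm
    (hmaps ((2 * s - 1 : ℕ) : ZMod (8 * n)) (by simp [Rconn]))).resolve_left
    fun ⟨_, heven⟩ => by
      rw [castHom_zmod_two_units_mul, map_natCast, ZMod.natCast_eq_zero_iff_even] at heven
      exact Nat.not_even_iff_odd.2 ⟨s - 1, by omega⟩ heven).1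
  have h8n : 8 * (n : ZMod (8 * n)) = 0 := by exact_mod_cast ZMod.natCast_self (8 * n)
  rcases four_mul_sub_eq_zero_or_four_mul_eq_zero h8n h2 ha with h | h
  · have := intCast_eq_zero_of_abs_lt (x := 4 * ((n : ℤ) - (2 * s - 1 : ℕ)))
      (by push_cast; exact h) (by rw [abs_lt]; push_cast; omega)
    omega
  · have := intCast_eq_zero_of_abs_lt (x := 4 * (n : ℤ))
      (by push_cast; exact h) (by rw [abs_lt]; push_cast; omega)
    omega

/-- C_{8n}(R) and C_{8n}(S) are not Adam's (Type-1) isomorphic: no unit u of ZMod (8n)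
satisfies u·R = S. -/
theorem not_adams_iso (n s : ℕ) (hn : 2 ≤ n) (hs : 1 ≤ s) (hsn : 2 * s - 1 ≤ 2 * n - 1)
    (hne : n ≠ 2 * s - 1) :
    ¬ ∃ u : (ZMod (8 * n))ˣ,
      (fun r => (u : ZMod (8 * n)) * r) '' Rconn n s = Sconn n s :=
  not_adams_iso_general n s hs hsn hne
end

section
/- Let n, m ∈ ℕ with m ∣ n and m ≥ 2, and let R ⊆ ZMod n satisfy 0 ∉ R and R = −R. Then the set T = {t ∈ ZMod (n/m) : there exists S ⊆ ZMod n such that for all a, b ∈ ZMod n, a − b ∈ R ↔ Θ_{n,m,t}(a) − Θ_{n,m,t}(b) ∈ S} is an additive subgroup of ZMod (n/m) (it contains 0 and is closed under addition and negation); consequently the set of images {Θ_{n,m,t}(C_n(R)) : t ∈ T} forms an abelian group under the composition induced by t ↦ t + t' taken modulo n/m. -/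
/-!
For `n > 0` let `ρ : ZMod n → ZMod m` be reduction, so that `Θ_t x = x + (ρ x).val * t * m`.
Since `ρ` is additive, `Θ_t a - Θ_t b` is `Θ_t (a - b)`, or `Θ_t (a - b) - t * m * m` when the
residues of `b` and `a - b` overflow, and `Θ_t` is injective. Hence `Θ_t` carries `C_n(R)` onto a
circulant graph iff translation by `t * m * m` preserves membership in `R` on
`P = {x | ρ x ≠ 0}`. Translations preserving `P` and `R ∩ P` form a subgroup, and `T` is its
preimage under the homomorphism `t ↦ t * m * m`.

For `n = 0` we have `ZMod 0 = ℤ` and the canonical representative of `x` is `|x|`, whose residue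
is not additive. Comparing pairs `(a, b)` with `0 ≤ a, b` against pairs with `b < 0 ≤ a`, and
reflecting through `R = -R`, the condition becomes invariance under translation by
`gcd(2, m) * m * t` on `{x | 3 ≤ m ∨ ¬ m ∣ x}`, and the same argument applies.
-/

section

open AddAction Pointwise

section ConnectionSet

variable {G : Type*}

def RespectsSub [AddGroup G] (f : G → G) (R : Set G) : Prop :=
  ∀ a b a' b', f a - f b = f a' - f b' → a - b ∈ R → a' - b' ∈ R

theorem exists_connectionSet_iff [AddGroup G] (f : G → G) (R : Set G) :
    (∃ S : Set G, ∀ a b, a - b ∈ R ↔ f a - f b ∈ S) ↔ RespectsSub f R := by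
  constructor
  · rintro ⟨S, hS⟩ a b a' b' h hab
    exact (hS a' b').2 (h ▸ (hS a b).1 hab)
  · intro h
    refine ⟨{v | ∃ a b, a - b ∈ R ∧ f a - f b = v},
      fun a b => ⟨fun hab => ⟨a, b, hab, rfl⟩, ?_⟩⟩
    rintro ⟨a', b', hab', he⟩
    exact h a' b' a b he hab'

variable [AddCommGroup G]

theorem mem_stabilizer_inf_iff {P R : Set G} {c : G} (hc : c ∈ stabilizer G P) :
    c ∈ stabilizer G P ⊓ stabilizer G (R ∩ P) ↔ ∀ x ∈ P, (x + c ∈ R ↔ x ∈ R) := by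
  rw [AddSubgroup.mem_inf, and_iff_right hc, mem_stabilizer_set]
  refine forall_congr' fun x => ?_
  have hP : x + c ∈ P ↔ x ∈ P := by rw [add_comm]; exact mem_stabilizer_set.1 hc x
  rw [vadd_eq_add, add_comm, Set.mem_inter_iff, Set.mem_inter_iff, hP]
  tauto

theorem add_zsmul_mem_iff {P R : Set G} {c : G} (hc : c ∈ stabilizer G P)
    (hR : ∀ x ∈ P, (x + c ∈ R ↔ x ∈ R)) (N : ℤ) :
    ∀ x ∈ P, (x + N • c ∈ R ↔ x ∈ R) :=
  (mem_stabilizer_inf_iff (zsmul_mem hc N)).1 (zsmul_mem ((mem_stabilizer_inf_iff hc).2 hR) N)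

theorem forall_add_neg_mem_iff {P R : Set G} {c : G} (hc : c ∈ stabilizer G P) :
    (∀ x ∈ P, (x + -c ∈ R ↔ x ∈ R)) ↔ ∀ x ∈ P, (x + c ∈ R ↔ x ∈ R) := by
  rw [← mem_stabilizer_inf_iff hc, ← mem_stabilizer_inf_iff (neg_mem hc), neg_mem_iff]

theorem exists_addSubgroup_eq_of_iff {Γ : Type*} [AddGroup Γ] (φ : Γ →+ G) (P R : Set G)
    (hφ : ∀ t, φ t ∈ stabilizer G P) (T : Set Γ)
    (hT : ∀ t, t ∈ T ↔ ∀ x ∈ P, (x + φ t ∈ R ↔ x ∈ R)) :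
    ∃ H : AddSubgroup Γ, (H : Set Γ) = T :=
  ⟨(stabilizer G P ⊓ stabilizer G (R ∩ P)).comap φ, Set.ext fun t => by
    rw [SetLike.mem_coe, AddSubgroup.mem_comap, mem_stabilizer_inf_iff (hφ t), hT]⟩

end ConnectionSet

theorem theta_zero (n m k : ℕ) : theta n m k 0 = 0 := by
  simp [theta]

section Positive

variable {n m : ℕ} (hmn : m ∣ n)

local notation "ρ" => ZMod.castHom hmn (ZMod m)

theorem castHom_natCast_mul_self (j : ℕ) : ρ ((j * m : ℕ) : ZMod n) = 0 := by
  rw [map_natCast, ZMod.natCast_eq_zero_iff]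
  exact dvd_mul_left m j

variable [NeZero n] (k : ℕ)

theorem theta_eq_castHom (x : ZMod n) :
    theta n m k x = x + (((ρ x).val * k * m : ℕ) : ZMod n) := by
  rw [ZMod.castHom_apply, ZMod.cast_eq_val, ZMod.val_natCast]
  rfl

theorem theta_add_of_castHom_eq_zero {y : ZMod n} (hy : ρ y = 0) (x : ZMod n) :
    theta n m k (x + y) = theta n m k x + y := by
  rw [theta_eq_castHom hmn, theta_eq_castHom hmn, map_add, hy, add_zero, add_right_comm]

theorem castHom_theta (x : ZMod n) : ρ (theta n m k x) = ρ x := by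
  rw [theta_eq_castHom hmn, map_add, castHom_natCast_mul_self hmn, add_zero]

theorem theta_injective (hmn : m ∣ n) : Function.Injective (theta n m k) := by
  intro x y h
  have hρ : ZMod.castHom hmn (ZMod m) x = ZMod.castHom hmn (ZMod m) y := by
    rw [← castHom_theta hmn k x, h, castHom_theta]
  rw [theta_eq_castHom hmn, theta_eq_castHom hmn, hρ] at h
  exact add_right_cancel h

theorem theta_sub_theta_of_lt (a b : ZMod n) (h : (ρ b).val + (ρ (a - b)).val < m) :
    theta n m k a - theta n m k b = theta n m k (a - b) := by
  have ha : (ρ a).val = (ρ b).val + (ρ (a - b)).val := by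
    rw [← ZMod.val_add_of_lt h, ← map_add, add_sub_cancel]
  rw [theta_eq_castHom hmn, theta_eq_castHom hmn, theta_eq_castHom hmn, ha]
  push_cast
  ring

theorem theta_sub_theta_of_le [NeZero m] (a b : ZMod n)
    (h : m ≤ (ρ b).val + (ρ (a - b)).val) :
    theta n m k a - theta n m k b = theta n m k (a - b) - ((k * m * m : ℕ) : ZMod n) := by
  have ha : (ρ a).val + m = (ρ b).val + (ρ (a - b)).val := by
    rw [ZMod.val_add_val_of_le h, ← map_add, add_sub_cancel]
  have ha' := congrArg (Nat.cast : ℕ → ZMod n) ha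
  rw [theta_eq_castHom hmn, theta_eq_castHom hmn, theta_eq_castHom hmn]
  push_cast at ha' ⊢
  linear_combination (k * m : ZMod n) * ha'

theorem exists_theta_sub_theta_eq [NeZero m] {R : Set (ZMod n)}
    (hR : ∀ x, ρ x ≠ 0 → (x + ((k * m * m : ℕ) : ZMod n) ∈ R ↔ x ∈ R))
    (a b : ZMod n) :
    ∃ e, theta n m k a - theta n m k b = theta n m k e ∧ (e ∈ R ↔ a - b ∈ R) := by
  rcases lt_or_ge ((ρ b).val + (ρ (a - b)).val) m with h | h
  · exact ⟨a - b, theta_sub_theta_of_lt hmn k a b h, Iff.rfl⟩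
  · have hc : ρ (-((k * m * m : ℕ) : ZMod n)) = 0 := by
      rw [map_neg, castHom_natCast_mul_self hmn, neg_zero]
    refine ⟨a - b - ((k * m * m : ℕ) : ZMod n), ?_, ?_⟩
    · rw [theta_sub_theta_of_le hmn k a b h, sub_eq_add_neg, sub_eq_add_neg (a - b),
        theta_add_of_castHom_eq_zero hmn k hc]
    · have hab : ρ (a - b) ≠ 0 := ZMod.val_pos.1 (by have := ZMod.val_lt (ρ b); omega)
      rw [← hR _ (by rwa [map_sub, castHom_natCast_mul_self hmn, sub_zero]), sub_add_cancel]

theorem respectsSub_theta_iff [Fact (1 < m)] (R : Set (ZMod n)) :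
    RespectsSub (theta n m k) R ↔
      ∀ x, ρ x ≠ 0 → (x + ((k * m * m : ℕ) : ZMod n) ∈ R ↔ x ∈ R) := by
  set c : ZMod n := ((k * m * m : ℕ) : ZMod n)
  have hc : ρ c = 0 := castHom_natCast_mul_self hmn _
  constructor
  · intro hresp x hx
    have hshift : theta n m k (x + c - 1) - theta n m k (-1) = theta n m k x - theta n m k 0 := by
      have hle : m ≤ (ρ (-1)).val + (ρ (x + c - 1 - -1)).val := by
        rw [map_neg, map_one, ZMod.neg_val, if_neg one_ne_zero, ZMod.val_one]
        have hx' : ρ (x + c - 1 - -1) ≠ 0 := by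
          rwa [sub_neg_eq_add, sub_add_cancel, map_add, hc, add_zero]
        have := ZMod.val_pos.2 hx'
        omega
      rw [theta_sub_theta_of_le hmn k _ _ hle, sub_neg_eq_add, sub_add_cancel,
        theta_add_of_castHom_eq_zero hmn k hc, add_sub_cancel_right, theta_zero, sub_zero]
    have h1 := hresp _ _ _ _ hshift
    have h2 := hresp _ _ _ _ hshift.symm
    simp only [sub_neg_eq_add, sub_add_cancel, sub_zero] at h1 h2
    exact ⟨h1, h2⟩
  · intro hR a b a' b' h hab
    obtain ⟨e, he, heR⟩ := exists_theta_sub_theta_eq hmn k hR a b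
    obtain ⟨e', he', he'R⟩ := exists_theta_sub_theta_eq hmn k hR a' b'
    rw [← he'R, ← theta_injective k hmn (he.symm.trans (h.trans he')), heR]
    exact hab

end Positive

theorem exists_addMonoidHom_val_mul {n m : ℕ} (hmn : m ∣ n) [NeZero (n / m)] :
    ∃ φ : ZMod (n / m) →+ ZMod n, ∀ t, φ t = ((t.val * m * m : ℕ) : ZMod n) := by
  have hφ : zmultiplesHom (ZMod n) ((m * m : ℕ) : ZMod n) (n / m : ℕ) = 0 := by
    rw [zmultiplesHom_apply, natCast_zsmul, nsmul_eq_mul, ← Nat.cast_mul,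
      ZMod.natCast_eq_zero_iff, ← mul_assoc, Nat.div_mul_cancel hmn]
    exact dvd_mul_right n m
  refine ⟨ZMod.lift (n / m) ⟨_, hφ⟩, fun t => ?_⟩
  have h := ZMod.lift_coe (n := n / m) ⟨_, hφ⟩ t.val
  rw [Int.cast_natCast, ZMod.natCast_zmod_val] at h
  rw [h, zmultiplesHom_apply, natCast_zsmul, nsmul_eq_mul, ← Nat.cast_mul, mul_assoc]

theorem exists_addSubgroup_theta {n m : ℕ} [NeZero n] (hmn : m ∣ n) (hm : 2 ≤ m)
    (R : Set (ZMod n)) :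
    ∃ H : AddSubgroup (ZMod (n / m)), (H : Set (ZMod (n / m))) = {t | ∃ S : Set (ZMod n),
      ∀ a b, a - b ∈ R ↔ theta n m t.val a - theta n m t.val b ∈ S} := by
  have : NeZero (n / m) := ⟨(Nat.div_pos (Nat.le_of_dvd (NeZero.pos n) hmn) (by omega)).ne'⟩
  have : Fact (1 < m) := ⟨hm⟩
  obtain ⟨φ, hφ⟩ := exists_addMonoidHom_val_mul hmn
  refine exists_addSubgroup_eq_of_iff φ {x | ZMod.castHom hmn (ZMod m) x ≠ 0} R
    (fun t => mem_stabilizer_set.2 fun x => ?_) _ fun t => ?_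
  · rw [vadd_eq_add, Set.mem_ofPred, Set.mem_ofPred, map_add, hφ, castHom_natCast_mul_self hmn,
      zero_add]
  · rw [Set.mem_ofPred, exists_connectionSet_iff, respectsSub_theta_iff hmn, hφ]
    exact Iff.rfl

section Integers

variable {m : ℕ}

-- `theta 0 m k` read on `ℤ = ZMod 0` (where `ZMod.val = Int.natAbs`), so that `ℤ`'s order and
-- arithmetic apply.
def thetaInt (m k : ℕ) : ℤ → ℤ := theta 0 m k

theorem thetaInt_apply (k : ℕ) (x : ℤ) :
    thetaInt m k x = x + ((x.natAbs % m * k * m : ℕ) : ℤ) := rfl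

theorem thetaInt_sub (k : ℕ) (a b : ℤ) : thetaInt m k a - thetaInt m k b =
    a - b + (((a.natAbs % m : ℕ) : ℤ) - (b.natAbs % m : ℕ)) * (k * m) := by
  rw [thetaInt_apply, thetaInt_apply]
  push_cast
  ring

theorem natAbs_mod_of_nonneg {x : ℤ} (hx : 0 ≤ x) : ((x.natAbs % m : ℕ) : ℤ) = x % m := by
  rw [Int.natCast_mod, Int.natCast_natAbs, abs_of_nonneg hx]

theorem dvd_natAbs_mod_sub_natAbs_mod_sub_sub {g : ℕ} (hg2 : g ∣ 2) (hgm : g ∣ m)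
    (a b : ℤ) :
    (g : ℤ) ∣ (((a.natAbs % m : ℕ) : ℤ) - (b.natAbs % m : ℕ)) - (a - b) := by
  have hmodEq (x : ℤ) : ((x.natAbs % m : ℕ) : ℤ) ≡ x [ZMOD g] := by
    have habs : (x.natAbs : ℤ) ≡ x [ZMOD 2] := by
      unfold Int.ModEq
      omega
    rw [Int.natCast_mod]
    exact ((Int.mod_modEq _ _).of_dvd (Int.natCast_dvd_natCast.2 hgm)).trans
      (habs.of_dvd (Int.natCast_dvd_natCast.2 hg2))
  exact ((hmodEq a).sub (hmodEq b)).symm.dvd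

theorem two_dvd_add_gcd_two (m : ℕ) : 2 ∣ m + Nat.gcd 2 m := by
  rcases Nat.even_or_odd m with h | h
  · rw [Nat.gcd_eq_left (even_iff_two_dvd.1 h)]
    exact dvd_add (even_iff_two_dvd.1 h) dvd_rfl
  · rw [Nat.Coprime.gcd_eq_one (Nat.coprime_two_left.2 h)]
    exact (Odd.add_one h).two_dvd

theorem mem_stabilizer_of_dvd {c : ℤ} (hc : (m : ℤ) ∣ c) :
    c ∈ stabilizer ℤ {x : ℤ | 3 ≤ m ∨ ¬ (m : ℤ) ∣ x} :=
  mem_stabilizer_set.2 fun x => by simp only [vadd_eq_add, Set.mem_ofPred, dvd_add_right hc]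

theorem neg_sub_mem_of_dvd {c y : ℤ} (hc : (m : ℤ) ∣ c)
    (hy : y ∈ {x : ℤ | 3 ≤ m ∨ ¬ (m : ℤ) ∣ x}) :
    -y - c ∈ {x : ℤ | 3 ≤ m ∨ ¬ (m : ℤ) ∣ x} := by
  simpa only [Set.mem_ofPred, sub_eq_add_neg, dvd_add_left (dvd_neg.2 hc), dvd_neg] using hy

theorem add_mem_iff_of_le {R P : Set ℤ} (hR : -R = R) {c s : ℤ} (hP : ∀ y ∈ P, -y - c ∈ P)
    (hsc : 2 * s ≤ c + 1) (h : ∀ y ∈ P, s ≤ y + c → (y + c ∈ R ↔ y ∈ R))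
    (y : ℤ) (hy : y ∈ P) :
    y + c ∈ R ↔ y ∈ R := by
  by_cases hys : s ≤ y + c
  · exact h y hy hys
  have hneg (x : ℤ) : -x ∈ R ↔ x ∈ R := by rw [← Set.mem_neg, hR]
  have := h (-y - c) (hP y hy) (by omega)
  rwa [show -y - c + c = -y by ring, show -y - c = -(y + c) by ring, hneg, hneg, Iff.comm] at this

-- `hcy` says that the pairs `(y + B, B)`, for any `0 ≤ B` with `B % m = u`, and
-- `(y + c - s, -s)`, of differences `y` and `y + c`, have equal `Θ`-differences.
theorem RespectsSub.add_mem_iff_of_thetaInt {k : ℕ} {R : Set ℤ}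
    (h : RespectsSub (thetaInt m k) R) {s u : ℕ} (hs : s < m) (hu : u < m) {c y : ℤ}
    (hys : s ≤ y + c)
    (hcy : ((y + u) % m - u) * (k * m) = c + ((y + c - s) % m - s) * (k * m)) :
    y + c ∈ R ↔ y ∈ R := by
  set B : ℤ := u + m * |y|
  have hB : 0 ≤ B := by positivity
  have hyB : 0 ≤ y + B := by nlinarith [le_abs_self (-y), abs_neg y]
  have hθ : thetaInt m k (y + c - s) - thetaInt m k (-s) =
      thetaInt m k (y + B) - thetaInt m k B := by
    have hs' : (((-(s : ℤ)).natAbs % m : ℕ) : ℤ) = s := by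
      rw [Int.natAbs_neg, Int.natAbs_natCast, Nat.mod_eq_of_lt hs]
    have hBu : B % m = u := by
      rw [Int.add_mul_emod_self_left, Int.emod_eq_of_lt (by positivity) (by omega)]
    have hyBu : (y + B) % m = (y + u) % m := by
      rw [← add_assoc, Int.add_mul_emod_self_left]
    rw [thetaInt_sub, thetaInt_sub, natAbs_mod_of_nonneg hyB, natAbs_mod_of_nonneg hB, hs',
      natAbs_mod_of_nonneg (by omega), hBu, hyBu]
    linear_combination -hcy
  have h1 := h _ _ _ _ hθ
  have h2 := h _ _ _ _ hθ.symm
  simp only [sub_neg_eq_add, sub_add_cancel, add_sub_cancel_right] at h1 h2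
  exact ⟨h1, h2⟩

theorem RespectsSub.forall_add_mem_iff_of_thetaInt (hm : 2 ≤ m) {k : ℕ} {R : Set ℤ}
    (hR : -R = R) (h : RespectsSub (thetaInt m k) R) :
    ∀ x ∈ {x : ℤ | 3 ≤ m ∨ ¬ (m : ℤ) ∣ x},
      (x + ((Nat.gcd 2 m * m : ℕ) : ℤ) * k ∈ R ↔ x ∈ R) := by
  set g := Nat.gcd 2 m
  rcases Nat.eq_zero_or_pos k with rfl | hk
  · simp
  have hP (y : ℤ) := neg_sub_mem_of_dvd (m := m) (y := y) (c := ((g * m : ℕ) : ℤ) * k)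
    ⟨g * k, by push_cast; ring⟩
  obtain rfl | hm3 : m = 2 ∨ 3 ≤ m := by omega
  · have hg : g = 2 := Nat.gcd_self 2
    refine add_mem_iff_of_le hR hP (s := 1) (by push_cast [hg]; omega) fun y hy hys => ?_
    refine h.add_mem_iff_of_thetaInt (s := 1) (u := 0) (by norm_num) (by norm_num) hys ?_
    have hy : ¬ (2 : ℤ) ∣ y := by simpa using hy
    push_cast [hg] at hys ⊢
    simp only [add_zero, sub_zero]
    rw [show y % 2 = 1 by omega, show (y + 4 * k - 1) % 2 = 0 by omega]
    ring
  · have hg1 : 1 ≤ g := Nat.gcd_pos_of_pos_left _ two_pos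
    have hg2 : g ≤ 2 := Nat.gcd_le_left _ two_pos
    obtain ⟨s, hs⟩ := two_dvd_add_gcd_two m
    have hs' : (m : ℤ) + g = 2 * s := by exact_mod_cast hs
    refine add_mem_iff_of_le hR hP (s := s) ?_ fun y _ hys => ?_
    · have hg1' : (1 : ℤ) ≤ g := by exact_mod_cast hg1
      have hk' : (1 : ℤ) ≤ k := by exact_mod_cast hk
      have hm' : (1 : ℤ) ≤ m := by exact_mod_cast (by omega : 1 ≤ m)
      push_cast
      nlinarith [mul_nonneg (sub_nonneg.2 hg1') (sub_nonneg.2 hm'),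
        mul_le_mul_of_nonneg_left hk' (by positivity : (0 : ℤ) ≤ g * m)]
    refine h.add_mem_iff_of_thetaInt (s := s) (u := m - s) (by omega) (by omega) hys ?_
    have hmod : (y + ((g * m : ℕ) : ℤ) * k - s) % m = (y + (m - s : ℕ)) % m := by
      conv_rhs => rw [← Int.add_mul_emod_self_right _ (g * k - 1 : ℤ)]
      push_cast [Nat.cast_sub (by omega : s ≤ m)]
      ring_nf
    rw [hmod]
    push_cast [Nat.cast_sub (by omega : s ≤ m)]
    linear_combination (-(k * m : ℤ)) * hs'

theorem respectsSub_thetaInt_of_forall (hm : 2 ≤ m) {k : ℕ} {R : Set ℤ}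
    (hR : ∀ x ∈ {x : ℤ | 3 ≤ m ∨ ¬ (m : ℤ) ∣ x},
      (x + ((Nat.gcd 2 m * m : ℕ) : ℤ) * k ∈ R ↔ x ∈ R)) :
    RespectsSub (thetaInt m k) R := by
  intro a b a' b' h hab
  rw [thetaInt_sub, thetaInt_sub] at h
  set g := Nat.gcd 2 m
  have hgm : (g : ℤ) ∣ m := Int.natCast_dvd_natCast.2 (Nat.gcd_dvd_right 2 m)
  have hmc : (m : ℤ) ∣ ((g * m : ℕ) : ℤ) * k := ⟨g * k, by push_cast; ring⟩
  have hδ : (g : ℤ) ∣ _ :=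
    dvd_natAbs_mod_sub_natAbs_mod_sub_sub (Nat.gcd_dvd_left 2 m) (Nat.gcd_dvd_right 2 m) a b
  have hδ' : (g : ℤ) ∣ _ :=
    dvd_natAbs_mod_sub_natAbs_mod_sub_sub (Nat.gcd_dvd_left 2 m) (Nat.gcd_dvd_right 2 m) a' b'
  set δ := ((a.natAbs % m : ℕ) : ℤ) - (b.natAbs % m : ℕ) with hδdef
  set δ' := ((a'.natAbs % m : ℕ) : ℤ) - (b'.natAbs % m : ℕ) with hδ'def
  obtain ⟨N, hN⟩ : (g : ℤ) ∣ δ - δ' := by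
    rw [show δ - δ' = δ - (a - b) - (δ' - (a' - b')) + (δ' - δ) * (k * m) by
      linear_combination h]
    exact dvd_add (dvd_sub hδ hδ') ((hgm.mul_left k).mul_left (δ' - δ))
  have hd' : a' - b' = a - b + N • (((g * m : ℕ) : ℤ) * k) := by
    rw [smul_eq_mul]
    push_cast
    linear_combination -h + (k * m : ℤ) * hN
  by_cases hd : a - b ∈ {x : ℤ | 3 ≤ m ∨ ¬ (m : ℤ) ∣ x}
  · rw [hd']
    exact (add_zsmul_mem_iff (mem_stabilizer_of_dvd hmc) hR N _ hd).2 hab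
  · simp only [Set.mem_ofPred, not_or, not_not] at hd
    obtain ⟨hm3, hdvd⟩ := hd
    obtain rfl : m = 2 := by omega
    have hd'2 : (2 : ℤ) ∣ a' - b' := hd' ▸ dvd_add hdvd (hmc.mul_left N)
    have hg : g = 2 := Nat.gcd_self 2
    rw [hg] at hδ hδ'
    obtain ⟨hδ0, hδ'0⟩ : δ = 0 ∧ δ' = 0 := by omega
    rw [hδ0, hδ'0, zero_mul, add_zero, add_zero] at h
    exact h ▸ hab

theorem exists_addSubgroup_thetaInt (hm : 2 ≤ m) {R : Set ℤ} (hR : -R = R) :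
    ∃ H : AddSubgroup ℤ, (H : Set ℤ) = {t | ∃ S : Set ℤ, ∀ a b,
      a - b ∈ R ↔ thetaInt m t.natAbs a - thetaInt m t.natAbs b ∈ S} := by
  have hmc (t : ℤ) : (m : ℤ) ∣ ((Nat.gcd 2 m * m : ℕ) : ℤ) * t :=
    ⟨Nat.gcd 2 m * t, by push_cast; ring⟩
  refine exists_addSubgroup_eq_of_iff (AddMonoidHom.mulLeft ((Nat.gcd 2 m * m : ℕ) : ℤ)) _ R
    (fun t => mem_stabilizer_of_dvd (hmc t)) _ fun t => ?_
  rw [Set.mem_ofPred, exists_connectionSet_iff, AddMonoidHom.coe_mulLeft]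
  obtain ⟨k, rfl | rfl⟩ := Int.eq_nat_or_neg t <;>
    simp only [Int.natAbs_natCast, Int.natAbs_neg, mul_neg,
      forall_add_neg_mem_iff (mem_stabilizer_of_dvd (hmc k))] <;>
    exact ⟨fun h => h.forall_add_mem_iff_of_thetaInt hm hR, respectsSub_thetaInt_of_forall hm⟩

end Integers

end

theorem type2_set_is_subgroup_general (n m : ℕ) (hmn : m ∣ n) (hm : 2 ≤ m)
    (R : Set (ZMod n)) (hsym : -R = R) :
    ∃ H : AddSubgroup (ZMod (n / m)),
      (H : Set (ZMod (n / m))) =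
        {t : ZMod (n / m) | ∃ S : Set (ZMod n),
          ∀ a b : ZMod n,
            a - b ∈ R ↔ theta n m t.val a - theta n m t.val b ∈ S} := by
  rcases Nat.eq_zero_or_pos n with rfl | hn
  · rw [Nat.zero_div]
    exact exists_addSubgroup_thetaInt hm hsym
  · have : NeZero n := ⟨hn.ne'⟩
    exact exists_addSubgroup_theta hmn hm R

/-- The set T of those t ∈ ZMod (n/m) for which Θ_{n,m,t} carries the circulant graph
C_n(R) onto some circulant graph C_n(S) is an additive subgroup of ZMod (n/m);
consequently the corresponding set of image circulant graphs is an abelian group under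
the composition induced by addition of the parameters t modulo n/m. -/
theorem type2_set_is_subgroup (n m : ℕ) (hmn : m ∣ n) (hm : 2 ≤ m)
    (R : Set (ZMod n)) (h0 : (0 : ZMod n) ∉ R) (hsym : -R = R) :
    ∃ H : AddSubgroup (ZMod (n / m)),
      (H : Set (ZMod (n / m))) =
        {t : ZMod (n / m) | ∃ S : Set (ZMod n),
          ∀ a b : ZMod n,
            a - b ∈ R ↔ theta n m t.val a - theta n m t.val b ∈ S} :=
  type2_set_is_subgroup_general n m hmn hm R hsym
end

section
/- Let R = {1, 3, 7, 9, 13, 15} ⊆ ZMod 16 and S = {2, 3, 5, 11, 13, 14} ⊆ ZMod 16. Then there is no unit u of ZMod 16 with u·R = S; that is, the circulant graphs C_16(R) and C_16(S) are not Adam's (Type-1) isomorphic. -/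
/-- C₁₆(1,3,7) and C₁₆(2,3,5) are not Adam's (Type-1) isomorphic: no unit u of ZMod 16
satisfies u·R = S where R = {1,3,7,9,13,15} and S = {2,3,5,11,13,14}. -/
theorem c16_not_adams_iso :
    ¬ ∃ u : (ZMod 16)ˣ,
      (fun r => (u : ZMod 16) * r) '' ({1, 3, 7, 9, 13, 15} : Set (ZMod 16)) =
        ({2, 3, 5, 11, 13, 14} : Set (ZMod 16)) := by
  rintro ⟨u, hu⟩
  have h2 : (2 : ZMod 16) ∈ (fun r => (u : ZMod 16) * r) ''
      ({1, 3, 7, 9, 13, 15} : Set (ZMod 16)) := by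
    rw [hu]; simp
  obtain ⟨r, hr, hur⟩ := h2
  have hru : IsUnit r := by
    rcases hr with h | h | h | h | h | h <;> subst h <;> decide
  have : IsUnit (2 : ZMod 16) := hur ▸ (u.isUnit.mul hru)
  exact absurd this (by decide)
end
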